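/- arXiv:1806.03042 — 4 statements merged into one kernel-verified Lean document; each statement's English description precedes it below -/
import Mathlib

section
/- Let (A,R) be a quasitriangular Hopf algebra over a field k with R = ∑ R⁽¹⁾ ⊗ R⁽²⁾, and set u := ∑ S(R⁽²⁾)R⁽¹⁾ ∈ A. Then u is invertible and S²(a) = u a u⁻¹ for all a ∈ A; moreover u⁻¹ = ∑ R⁽²⁾ S²(R⁽¹⁾) and ε(u) = 1. -/
open TensorProduct HopfAlgebra

noncomputable section

variable (k A : Type*) [Field k] [Ring A] [HopfAlgebra k A]

/-- The element `R₁₂ = ∑ R⁽¹⁾ ⊗ R⁽²⁾ ⊗ 1` of `A ⊗ A ⊗ A`, as an algebra map applied to `R`. -/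
def r12 : A ⊗[k] A →ₐ[k] A ⊗[k] (A ⊗[k] A) :=
  Algebra.TensorProduct.map (AlgHom.id k A) Algebra.TensorProduct.includeLeft

/-- `R₁₃ = ∑ R⁽¹⁾ ⊗ 1 ⊗ R⁽²⁾`. -/
def r13 : A ⊗[k] A →ₐ[k] A ⊗[k] (A ⊗[k] A) :=
  Algebra.TensorProduct.map (AlgHom.id k A) Algebra.TensorProduct.includeRight

/-- `R₂₃ = ∑ 1 ⊗ R⁽¹⁾ ⊗ R⁽²⁾`. -/
def r23 : A ⊗[k] A →ₐ[k] A ⊗[k] (A ⊗[k] A) :=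
  Algebra.TensorProduct.includeRight

/-- `R ∈ A ⊗ A` is a universal R-matrix: it is invertible and satisfies the Drinfeld axioms
`(Δ ⊗ id)(R) = R₁₃R₂₃`, `(id ⊗ Δ)(R) = R₁₃R₁₂` and `R Δ(a) = Δᵒᵖ(a) R`. -/
def IsUniversalRMatrix (R : A ⊗[k] A) : Prop :=
  IsUnit R ∧
  (TensorProduct.assoc k A A A) (LinearMap.rTensor A Coalgebra.comul R)
      = r13 k A R * r23 k A R ∧
  LinearMap.lTensor A Coalgebra.comul R = r13 k A R * r12 k A R ∧
  ∀ a : A, R * Coalgebra.comul a = (TensorProduct.comm k A A) (Coalgebra.comul a) * R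

/-- The Drinfeld element `u = ∑ S(R⁽²⁾) R⁽¹⁾` of a quasitriangular Hopf algebra. -/
def drinfeldElement (R : A ⊗[k] A) : A :=
  LinearMap.mul' k A
    (LinearMap.rTensor A (antipode (R := k)) ((TensorProduct.comm k A A) R))
end

/-!
Write `R = ∑ sᵢ ⊗ tᵢ`. Applying multiplication-and-antipode maps to the two hexagon axioms
yields `(ε ⊗ id) R = (id ⊗ ε) R = 1`, `R · (S ⊗ id) R = 1`, `(S ⊗ S) R = R`,
`∑ S(tᵢ) u S(sᵢ) = 1` and `∑ tᵢ u sᵢ = 1`. Applying `x ⊗ y ↦ S(y) x` to `R Δ(a) = Δᵒᵖ(a) R`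
yields `∑ S(a₂) u a₁ = ε(a) u`, and contracting `∑ S²(a₃) S(a₂) u a₁` in the two possible ways
turns this into `u a = S²(a) u`. Hence `w = ∑ tᵢ S²(sᵢ)` satisfies `w u = ∑ tᵢ u sᵢ = 1` and
`u w = ∑ S²(tᵢ) u S²(sᵢ) = 1`, the latter because `∑ S(sᵢ) ⊗ S(tᵢ)` is another expression of `R`.
-/

open scoped Coalgebra

section Hopf

variable {k A : Type*} [CommSemiring k] [Semiring A] [HopfAlgebra k A]

local notation "S" => antipode k
local notation "ε" => Coalgebra.counit (R := k) (A := A)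

theorem Coalgebra.sum_counit_right_smul {a : A} {ι : Type*} (r : Coalgebra.Repr k a ι) :
    ∑ i ∈ r.index, ε (r.right i) • r.left i = a := by
  simpa only [map_sum, rid_tmul, one_smul] using
    congrArg (_root_.TensorProduct.rid k A) (Coalgebra.sum_tmul_counit_eq r)

theorem Bialgebra.eq_one_of_one_tmul_eq_one {e : A} (h : (1 : A) ⊗ₜ[k] e = 1) : e = 1 := by
  simpa [Algebra.TensorProduct.one_def] using
    congrArg (TensorProduct.lid k A ∘ LinearMap.rTensor A Coalgebra.counit) h

theorem Bialgebra.eq_one_of_tmul_one_eq_one {e : A} (h : e ⊗ₜ[k] (1 : A) = 1) : e = 1 := by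
  simpa [Algebra.TensorProduct.one_def] using
    congrArg (_root_.TensorProduct.rid k A ∘ LinearMap.lTensor A Coalgebra.counit) h

theorem HopfAlgebra.mul_eq_antipode_antipode_mul {u : A}
    (hu : ∀ a : A, ∑ i ∈ (ℛ k a).index, S ((ℛ k a).right i) * u * (ℛ k a).left i = ε a • u)
    (a : A) : u * a = S (S a) * u := by
  set r := ℛ k a
  -- apply `x ⊗ y ⊗ z ↦ S²(z) S(y) u x` to coassociativity
  have h := congrArg (LinearMap.mul' k A ∘ₗ (TensorProduct.comm k A A).toLinearMap ∘ₗ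
      TensorProduct.map (LinearMap.mulLeft k u)
        (LinearMap.mul' k A ∘ₗ (TensorProduct.comm k A A).toLinearMap ∘ₗ
          TensorProduct.map (antipode k) (antipode k ∘ₗ antipode k)))
      (Coalgebra.sum_tmul_tmul_eq r (fun i ↦ ℛ k (r.left i)) (fun i ↦ ℛ k (r.right i)))
  simp only [map_sum, LinearMap.comp_apply, TensorProduct.map_tmul, LinearEquiv.coe_coe,
    TensorProduct.comm_tmul, LinearMap.mul'_apply, LinearMap.mulLeft_apply, ← mul_assoc] at h
  calc u * a = ∑ i ∈ r.index, ε (r.right i) • (u * r.left i) := by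
        simp only [← mul_smul_comm, ← Finset.mul_sum, Coalgebra.sum_counit_right_smul]
    _ = ∑ i ∈ r.index, ∑ j ∈ (ℛ k (r.right i)).index,
          S (S ((ℛ k (r.right i)).right j)) * S ((ℛ k (r.right i)).left j) * u * r.left i := by
        refine Finset.sum_congr rfl fun i _ ↦ ?_
        simp only [← antipode_mul_antidistrib, ← Finset.sum_mul, ← map_sum,
          sum_mul_antipode_eq_smul, map_smul, antipode_one, smul_mul_assoc, one_mul]
    _ = ∑ i ∈ r.index, S (S (r.right i)) * (ε (r.left i) • u) := by
        rw [← h]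
        simp only [mul_assoc, ← Finset.mul_sum]
        simp only [← mul_assoc, hu]
    _ = S (S a) * u := by
        simp only [mul_smul_comm, ← smul_mul_assoc, ← Finset.sum_mul, ← map_smul, ← map_sum,
          Coalgebra.sum_counit_smul]

end Hopf

variable (k A : Type*) [Field k] [Ring A] [HopfAlgebra k A]

section

variable {k A}

local notation "S" => antipode k
local notation "ε" => Coalgebra.counit (R := k) (A := A)

theorem drinfeldElement_eq_sum {R : A ⊗[k] A} {ι : Type*} {I : Finset ι} {s t : ι → A}
    (hsum : ∑ i ∈ I, s i ⊗ₜ[k] t i = R) : drinfeldElement k A R = ∑ i ∈ I, S (t i) * s i := by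
  simp [drinfeldElement, ← hsum, map_sum]

namespace IsUniversalRMatrix

variable {R : A ⊗[k] A} {ι : Type*} {I : Finset ι} {s t : ι → A}

theorem sum_comul_tmul_eq (hR : IsUniversalRMatrix k A R) (hsum : ∑ i ∈ I, s i ⊗ₜ[k] t i = R) :
    ∑ i ∈ I, Coalgebra.comul (R := k) (s i) ⊗ₜ[k] t i =
      ∑ i ∈ I, ∑ j ∈ I, (s i ⊗ₜ[k] s j) ⊗ₜ[k] (t i * t j) := by
  apply (TensorProduct.assoc k A A A).injective
  have h := hR.2.1
  rw [← hsum] at h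
  simpa [map_sum, r13, r23, Finset.sum_mul_sum, Algebra.TensorProduct.tmul_mul_tmul] using h

theorem sum_tmul_comul_eq (hR : IsUniversalRMatrix k A R) (hsum : ∑ i ∈ I, s i ⊗ₜ[k] t i = R) :
    ∑ i ∈ I, s i ⊗ₜ[k] Coalgebra.comul (R := k) (t i) =
      ∑ i ∈ I, ∑ j ∈ I, (s i * s j) ⊗ₜ[k] (t j ⊗ₜ[k] t i) := by
  have h := hR.2.2.1
  rw [← hsum] at h
  simpa [map_sum, r13, r12, Finset.sum_mul_sum, Algebra.TensorProduct.tmul_mul_tmul] using h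

theorem sum_counit_left_smul_eq_one (hR : IsUniversalRMatrix k A R)
    (hsum : ∑ i ∈ I, s i ⊗ₜ[k] t i = R) : ∑ i ∈ I, ε (s i) • t i = 1 := by
  have h := congrArg (LinearMap.rTensor A
    ((TensorProduct.lid k A).toLinearMap ∘ₗ LinearMap.rTensor A Coalgebra.counit))
    (hR.sum_comul_tmul_eq hsum)
  simp only [map_sum, LinearMap.rTensor_tmul, LinearMap.comp_apply, LinearEquiv.coe_coe,
    Coalgebra.rTensor_counit_comul, lid_tmul, one_smul, hsum] at h
  refine Bialgebra.eq_one_of_one_tmul_eq_one (hR.1.mul_eq_right.1 ?_)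
  conv_rhs => rw [h]
  rw [← hsum]
  simp only [tmul_sum, tmul_smul, ← smul_tmul', Finset.sum_mul_sum, smul_mul_assoc,
    Algebra.TensorProduct.tmul_mul_tmul, one_mul]

theorem sum_counit_right_smul_eq_one (hR : IsUniversalRMatrix k A R)
    (hsum : ∑ i ∈ I, s i ⊗ₜ[k] t i = R) : ∑ i ∈ I, ε (t i) • s i = 1 := by
  have h := congrArg (LinearMap.lTensor A
    ((TensorProduct.rid k A).toLinearMap ∘ₗ LinearMap.lTensor A Coalgebra.counit))
    (hR.sum_tmul_comul_eq hsum)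
  simp only [map_sum, LinearMap.lTensor_tmul, LinearMap.comp_apply, LinearEquiv.coe_coe,
    Coalgebra.lTensor_counit_comul, rid_tmul, one_smul, hsum] at h
  refine Bialgebra.eq_one_of_tmul_one_eq_one (hR.1.mul_eq_right.1 ?_)
  conv_rhs => rw [h]
  rw [← hsum]
  simp only [sum_tmul, Finset.sum_mul_sum, smul_mul_assoc, Algebra.TensorProduct.tmul_mul_tmul,
    one_mul, smul_tmul]

theorem mul_sum_antipode_tmul_eq_one (hR : IsUniversalRMatrix k A R)
    (hsum : ∑ i ∈ I, s i ⊗ₜ[k] t i = R) : R * ∑ i ∈ I, S (s i) ⊗ₜ[k] t i = 1 := by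
  have h := congrArg (LinearMap.rTensor A (LinearMap.mul' k A ∘ₗ LinearMap.lTensor A (antipode k)))
    (hR.sum_comul_tmul_eq hsum)
  simp only [map_sum, LinearMap.rTensor_tmul, LinearMap.comp_apply,
    mul_antipode_lTensor_comul_apply, LinearMap.lTensor_tmul, LinearMap.mul'_apply] at h
  rw [← hsum, Finset.sum_mul_sum]
  simp only [Algebra.TensorProduct.tmul_mul_tmul, ← h, Algebra.algebraMap_eq_smul_one, smul_tmul,
    ← tmul_sum, hR.sum_counit_left_smul_eq_one hsum, Algebra.TensorProduct.one_def]

theorem sum_antipode_tmul_antipode_eq (hR : IsUniversalRMatrix k A R)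
    (hsum : ∑ i ∈ I, s i ⊗ₜ[k] t i = R) : ∑ i ∈ I, S (s i) ⊗ₜ[k] S (t i) = R := by
  have h := congrArg (TensorProduct.map (antipode k)
    (LinearMap.mul' k A ∘ₗ LinearMap.lTensor A (antipode k))) (hR.sum_tmul_comul_eq hsum)
  simp only [map_sum, TensorProduct.map_tmul, LinearMap.comp_apply,
    mul_antipode_lTensor_comul_apply, LinearMap.lTensor_tmul, LinearMap.mul'_apply] at h
  have hinv : (∑ i ∈ I, S (s i) ⊗ₜ[k] t i) * ∑ i ∈ I, S (s i) ⊗ₜ[k] S (t i) = 1 := by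
    rw [Finset.sum_mul_sum, Finset.sum_comm]
    simp only [Algebra.TensorProduct.tmul_mul_tmul, ← antipode_mul_antidistrib, ← h,
      Algebra.algebraMap_eq_smul_one, ← smul_tmul, ← map_smul, ← sum_tmul, ← map_sum,
      hR.sum_counit_right_smul_eq_one hsum, antipode_one, Algebra.TensorProduct.one_def]
  calc ∑ i ∈ I, S (s i) ⊗ₜ[k] S (t i)
      = R * (∑ i ∈ I, S (s i) ⊗ₜ[k] t i) * ∑ i ∈ I, S (s i) ⊗ₜ[k] S (t i) := by
        rw [hR.mul_sum_antipode_tmul_eq_one hsum, one_mul]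
    _ = R := by rw [mul_assoc, hinv, mul_one]

theorem sum_antipode_mul_drinfeldElement_mul_antipode_eq_one (hR : IsUniversalRMatrix k A R)
    (hsum : ∑ i ∈ I, s i ⊗ₜ[k] t i = R) :
    ∑ i ∈ I, S (t i) * drinfeldElement k A R * S (s i) = 1 := by
  -- apply `x ⊗ y ⊗ z ↦ S(z) x S(y)`
  have h := congrArg (LinearMap.mul' k A ∘ₗ (TensorProduct.comm k A A).toLinearMap ∘ₗ
    TensorProduct.map (LinearMap.mul' k A ∘ₗ LinearMap.lTensor A (antipode k)) (antipode k))
    (hR.sum_comul_tmul_eq hsum)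
  simp only [map_sum, TensorProduct.map_tmul, LinearMap.comp_apply, LinearEquiv.coe_coe,
    TensorProduct.comm_tmul, mul_antipode_lTensor_comul_apply, LinearMap.lTensor_tmul,
    LinearMap.mul'_apply] at h
  rw [drinfeldElement_eq_sum hsum]
  simp only [Finset.mul_sum, Finset.sum_mul]
  rw [Finset.sum_comm]
  simp only [antipode_mul_antidistrib, mul_assoc] at h
  simp only [mul_assoc, ← h, Algebra.algebraMap_eq_smul_one, mul_smul_comm, mul_one, ← map_smul,
    ← map_sum, hR.sum_counit_left_smul_eq_one hsum, antipode_one]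

theorem sum_mul_drinfeldElement_mul_eq_one (hR : IsUniversalRMatrix k A R)
    (hsum : ∑ i ∈ I, s i ⊗ₜ[k] t i = R) : ∑ i ∈ I, t i * drinfeldElement k A R * s i = 1 := by
  -- apply `x ⊗ y ⊗ z ↦ y S(z) x`
  have h := congrArg (LinearMap.mul' k A ∘ₗ (TensorProduct.comm k A A).toLinearMap ∘ₗ
    LinearMap.lTensor A (LinearMap.mul' k A ∘ₗ LinearMap.lTensor A (antipode k)))
    (hR.sum_tmul_comul_eq hsum)
  simp only [map_sum, LinearMap.lTensor_tmul, LinearMap.comp_apply, LinearEquiv.coe_coe,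
    TensorProduct.comm_tmul, mul_antipode_lTensor_comul_apply,
    LinearMap.mul'_apply] at h
  rw [drinfeldElement_eq_sum hsum]
  simp only [Finset.mul_sum, Finset.sum_mul]
  rw [Finset.sum_comm]
  simp only [mul_assoc] at h
  simp only [mul_assoc, ← h, Algebra.algebraMap_eq_smul_one, smul_mul_assoc, one_mul,
    hR.sum_counit_right_smul_eq_one hsum]

theorem sum_antipode_mul_drinfeldElement_mul_eq_counit_smul (hR : IsUniversalRMatrix k A R)
    {a : A} {κ : Type*} (r : Coalgebra.Repr k a κ) :
    ∑ j ∈ r.index, S (r.right j) * drinfeldElement k A R * r.left j =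
      ε a • drinfeldElement k A R := by
  obtain ⟨F, hF⟩ := TensorProduct.exists_finset (R := k) R
  have h := congrArg (LinearMap.mul' k A ∘ₗ LinearMap.rTensor A (antipode k) ∘ₗ
    (TensorProduct.comm k A A).toLinearMap) (hR.2.2.2 a)
  rw [← r.eq, hF, map_sum, Finset.sum_mul_sum, Finset.sum_mul_sum] at h
  simp only [map_sum, Algebra.TensorProduct.tmul_mul_tmul, LinearMap.comp_apply,
    LinearEquiv.coe_coe, TensorProduct.comm_tmul, LinearMap.rTensor_tmul, LinearMap.mul'_apply,
    antipode_mul_antidistrib, mul_assoc] at h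
  rw [drinfeldElement_eq_sum hF.symm]
  calc ∑ j ∈ r.index, S (r.right j) * (∑ m ∈ F, S m.2 * m.1) * r.left j
      = ∑ m ∈ F, ∑ j ∈ r.index, S (r.right j) * (S m.2 * (m.1 * r.left j)) := by
        simp only [Finset.mul_sum, Finset.sum_mul, mul_assoc]
        exact Finset.sum_comm
    _ = ∑ m ∈ F, S m.2 * (∑ j ∈ r.index, S (r.left j) * r.right j) * m.1 := by
        rw [h, Finset.sum_comm]
        simp only [Finset.mul_sum, Finset.sum_mul, mul_assoc]
    _ = ε a • ∑ m ∈ F, S m.2 * m.1 := by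
        simp only [sum_antipode_mul_eq_smul r, mul_smul_comm, smul_mul_assoc, mul_one,
          Finset.smul_sum]

theorem drinfeldElement_mul (hR : IsUniversalRMatrix k A R) (a : A) :
    drinfeldElement k A R * a = S (S a) * drinfeldElement k A R :=
  mul_eq_antipode_antipode_mul
    (fun b ↦ hR.sum_antipode_mul_drinfeldElement_mul_eq_counit_smul (ℛ k b)) a

theorem counit_drinfeldElement (hR : IsUniversalRMatrix k A R) :
    ε (drinfeldElement k A R) = 1 := by
  obtain ⟨F, hF⟩ := TensorProduct.exists_finset (R := k) R
  have h := congrArg ε (hR.sum_counit_right_smul_eq_one hF.symm)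
  simp only [map_sum, map_smul, smul_eq_mul, Bialgebra.counit_one] at h
  simp only [drinfeldElement_eq_sum hF.symm, map_sum, Bialgebra.counit_mul,
    counit_antipode, h]

theorem drinfeldElement_mul_sum_mul_antipode_antipode_eq_one (hR : IsUniversalRMatrix k A R)
    (hsum : ∑ i ∈ I, s i ⊗ₜ[k] t i = R) :
    drinfeldElement k A R * ∑ i ∈ I, t i * S (S (s i)) = 1 := by
  rw [Finset.mul_sum, ← hR.sum_antipode_mul_drinfeldElement_mul_antipode_eq_one
    (hR.sum_antipode_tmul_antipode_eq hsum)]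
  exact Finset.sum_congr rfl fun i _ ↦ by rw [← mul_assoc, hR.drinfeldElement_mul]

theorem sum_mul_antipode_antipode_mul_drinfeldElement_eq_one (hR : IsUniversalRMatrix k A R)
    (hsum : ∑ i ∈ I, s i ⊗ₜ[k] t i = R) :
    (∑ i ∈ I, t i * S (S (s i))) * drinfeldElement k A R = 1 := by
  simp only [Finset.sum_mul, mul_assoc, ← hR.drinfeldElement_mul]
  simpa only [mul_assoc] using hR.sum_mul_drinfeldElement_mul_eq_one hsum

end IsUniversalRMatrix
end

/-- The Drinfeld element `u` is invertible with inverse `∑ R⁽²⁾ S²(R⁽¹⁾)`,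
it satisfies `S²(a) = u a u⁻¹` for all `a`, and `ε(u) = 1`. -/
theorem drinfeldElement_spec (R : A ⊗[k] A) (hR : IsUniversalRMatrix k A R) :
    ∃ w : A,
      drinfeldElement k A R * w = 1 ∧ w * drinfeldElement k A R = 1 ∧
      w = LinearMap.mul' k A
            (LinearMap.lTensor A ((antipode (R := k)) ∘ₗ (antipode (R := k)))
              ((TensorProduct.comm k A A) R)) ∧
      (∀ a : A, (antipode (R := k)) ((antipode (R := k)) a)
          = drinfeldElement k A R * a * w) ∧
      Coalgebra.counit (R := k) (drinfeldElement k A R) = (1 : k) := by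
  obtain ⟨F, hF⟩ := TensorProduct.exists_finset (R := k) R
  have hu_mul_w := hR.drinfeldElement_mul_sum_mul_antipode_antipode_eq_one hF.symm
  refine ⟨_, hu_mul_w, hR.sum_mul_antipode_antipode_mul_drinfeldElement_eq_one hF.symm,
    by simp [hF, map_sum], fun a ↦ ?_, hR.counit_drinfeldElement⟩
  rw [hR.drinfeldElement_mul, mul_assoc, hu_mul_w, mul_one]
end

section
/- Let n ≥ 1, ω ∈ ℂ a primitive n-th root of unity, and E_k = (1/n) ∑_{i=0}^{n-1} ω^{-ik} a^i in the group algebra ℂC_n of the cyclic group of order n generated by a. For each d ∈ {0,1,…,n-1}, the element R_d = ∑_{k,l=0}^{n-1} ω^{dkl} E_k ⊗ E_l is a universal R-matrix of the Hopf algebra ℂC_n, i.e., (ℂC_n, R_d) is quasitriangular. -/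
open TensorProduct

noncomputable section

/-- The cyclic group `C_n` of order `n`, written multiplicatively, generated by `a`. -/
abbrev Cyc (n : ℕ) := Multiplicative (ZMod n)

/-- The group algebra `ℂC_n`. -/
abbrev CCn (n : ℕ) := MonoidAlgebra ℂ (Cyc n)

/-- The generator `a` of `C_n`, viewed in `ℂC_n`. -/
def aElem (n : ℕ) : CCn n := MonoidAlgebra.of ℂ (Cyc n) (Multiplicative.ofAdd 1)

/-- The idempotent `E_k = (1/n) ∑_{i=0}^{n-1} ω^{-ik} aⁱ` of `ℂC_n`. -/
def Ee (n : ℕ) (ω : ℂ) (kk : ℤ) : CCn n :=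
  (n : ℂ)⁻¹ • ∑ i ∈ Finset.range n, ω ^ (-(i * kk : ℤ)) • aElem n ^ i

/-- The standard comultiplication of the group algebra, `Δ(g) = g ⊗ g`. -/
def comulCCn (n : ℕ) : CCn n →ₐ[ℂ] CCn n ⊗[ℂ] CCn n :=
  MonoidAlgebra.lift ℂ _ (Cyc n)
    { toFun := fun g => MonoidAlgebra.of ℂ (Cyc n) g ⊗ₜ[ℂ] MonoidAlgebra.of ℂ (Cyc n) g
      map_one' := by simp [Algebra.TensorProduct.one_def, MonoidAlgebra.one_def]
      map_mul' := by
        intro g h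
        simp [Algebra.TensorProduct.tmul_mul_tmul] }

/-- The standard counit of the group algebra, `ε(g) = 1`. -/
def counitCCn (n : ℕ) : CCn n →ₐ[ℂ] ℂ :=
  MonoidAlgebra.lift ℂ ℂ (Cyc n) 1

/-- The standard antipode of the group algebra, `S(g) = g⁻¹`. -/
def antipodeCCn (n : ℕ) : CCn n →ₐ[ℂ] CCn n :=
  MonoidAlgebra.lift ℂ _ (Cyc n)
    { toFun := fun g => MonoidAlgebra.of ℂ (Cyc n) g⁻¹
      map_one' := by simp [MonoidAlgebra.one_def]
      map_mul' := by intro g h; simp [mul_comm] }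

/-- The R-matrix `R_d = ∑_{k,l} ω^{dkl} E_k ⊗ E_l`. -/
def Rmat (n : ℕ) (ω : ℂ) (d : ℕ) : CCn n ⊗[ℂ] CCn n :=
  ∑ kk ∈ Finset.range n, ∑ l ∈ Finset.range n,
    ω ^ (d * kk * l) • (Ee n ω (kk : ℤ) ⊗ₜ[ℂ] Ee n ω (l : ℤ))


/-!
Work more generally in `k[R]` for a finite commutative ring `R` carrying a primitive additive
character `ψ` (here `R = ZMod n` and `ψ g = ω ^ g`), with `E_r = |R|⁻¹ ∑_g ψ(-r g) a^g`.
Every group element acts on `E_r` by a scalar, `a^g E_r = ψ(r g) E_r`, and character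
orthogonality makes the `E_r` orthogonal idempotents summing to `1`. Hence
`a^g = ∑_r ψ(r g) E_r`, and comparing with `Δ(a^g) = a^g ⊗ a^g` gives
`Δ(E_m) = ∑_r E_r ⊗ E_{m-r}`. In this basis `R_d = ∑_r E_r ⊗ a^{dr}`, so `R_d R_{d'} = R_{d+d'}`
gives invertibility, and the two hexagon identities reduce to `a^{d(p+q)} = a^{dp} a^{dq}` and
the orthogonality of the `E_r`. The last axiom holds because `ℂC_n` is commutative and
cocommutative.
-/

namespace MonoidAlgebra

variable {k R : Type*} [Field k] [CommRing R]

def charAlgHom (ψ : AddChar R k) (r : R) : k[Multiplicative R] →ₐ[k] k :=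
  lift k k (Multiplicative R) (ψ.mulShift r).toMonoidHom

@[simp]
lemma charAlgHom_of (ψ : AddChar R k) (r g : R) :
    charAlgHom ψ r (of k _ (Multiplicative.ofAdd g)) = ψ (r * g) := by
  simp [charAlgHom]

variable [Fintype R]

def charIdempotent (ψ : AddChar R k) (r : R) : k[Multiplicative R] :=
  (Fintype.card R : k)⁻¹ • ∑ g : R, ψ (-(r * g)) • of k _ (Multiplicative.ofAdd g)

def rMatrix (ψ : AddChar R k) (d : R) : k[Multiplicative R] ⊗[k] k[Multiplicative R] :=
  ∑ r : R, charIdempotent ψ r ⊗ₜ of k _ (Multiplicative.ofAdd (d * r))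

variable (ψ : AddChar R k)

lemma of_mul_charIdempotent (g r : R) :
    of k _ (Multiplicative.ofAdd g) * charIdempotent ψ r = ψ (r * g) • charIdempotent ψ r := by
  rw [charIdempotent, mul_smul_comm, smul_comm (ψ (r * g)) (Fintype.card R : k)⁻¹]
  congr 1
  rw [Finset.mul_sum, Finset.smul_sum]
  refine Fintype.sum_equiv (Equiv.addLeft g) _ _ fun h => ?_
  rw [mul_smul_comm, ← map_mul, ← ofAdd_add, smul_smul, ← AddChar.map_add_eq_mul,
    Equiv.coe_addLeft]
  congr 2
  ring

lemma mul_charIdempotent (x : k[Multiplicative R]) (r : R) :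
    x * charIdempotent ψ r = charAlgHom ψ r x • charIdempotent ψ r := by
  induction x using MonoidAlgebra.induction_on with
  | of g => rw [← ofAdd_toAdd g, of_mul_charIdempotent, charAlgHom_of]
  | add x y hx hy => rw [add_mul, hx, hy, map_add, add_smul]
  | smul c x hx => rw [smul_mul_assoc, hx, map_smul, smul_assoc]

lemma comul_mul_tmul_charIdempotent (x : k[Multiplicative R]) (r s : R) :
    Coalgebra.comul (R := k) x * (charIdempotent ψ r ⊗ₜ charIdempotent ψ s)
      = charAlgHom ψ (r + s) x • (charIdempotent ψ r ⊗ₜ charIdempotent ψ s) := by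
  induction x using MonoidAlgebra.induction_on with
  | of g =>
    rw [(isGroupLikeElem_of (R := k) g).comul_eq_tmul_self, Algebra.TensorProduct.tmul_mul_tmul,
      ← ofAdd_toAdd g, of_mul_charIdempotent, of_mul_charIdempotent, smul_tmul_smul,
      ← AddChar.map_add_eq_mul, ← add_mul, charAlgHom_of]
  | add x y hx hy => rw [map_add, add_mul, hx, hy, map_add, add_smul]
  | smul c x hx => rw [map_smul, smul_mul_assoc, hx, map_smul, smul_assoc]

variable [DecidableEq R] {ψ} (hψ : ψ.IsPrimitive) [NeZero (Fintype.card R : k)]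
include hψ

lemma charAlgHom_charIdempotent (r s : R) :
    charAlgHom ψ s (charIdempotent ψ r) = if r = s then 1 else 0 := by
  have hsum : ∑ g : R, ψ (-(r * g)) * ψ (s * g) = ∑ g : R, ψ (g * (s - r)) := by
    refine Finset.sum_congr rfl fun g _ => ?_
    rw [← AddChar.map_add_eq_mul]
    congr 1
    ring
  simp only [charIdempotent, map_smul, map_sum, charAlgHom_of, smul_eq_mul, hsum,
    AddChar.sum_mulShift _ hψ, sub_eq_zero, eq_comm (a := s)]
  split_ifs <;> simp [NeZero.ne]

lemma charIdempotent_mul_charIdempotent (r s : R) :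
    charIdempotent ψ r * charIdempotent ψ s = if r = s then charIdempotent ψ r else 0 := by
  rw [mul_charIdempotent, charAlgHom_charIdempotent hψ]
  split_ifs with h
  · rw [h, one_smul]
  · rw [zero_smul]

lemma sum_charIdempotent : ∑ r : R, charIdempotent ψ r = 1 := by
  have hsum : ∀ g : R, ∑ r : R, ψ (-(r * g)) = if g = 0 then (Fintype.card R : k) else 0 := by
    intro g
    simp_rw [← mul_neg, AddChar.sum_mulShift _ hψ, neg_eq_zero, Nat.cast_ite, Nat.cast_zero]
  simp only [charIdempotent, ← Finset.smul_sum]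
  rw [Finset.sum_comm]
  simp only [← Finset.sum_smul, hsum, ite_smul, zero_smul, Finset.sum_ite_eq', Finset.mem_univ,
    if_true, smul_smul, inv_mul_cancel₀ (NeZero.ne _), one_smul, ofAdd_zero, map_one]

lemma of_eq_sum_smul_charIdempotent (g : R) :
    of k _ (Multiplicative.ofAdd g) = ∑ r : R, ψ (r * g) • charIdempotent ψ r := by
  rw [← mul_one (of k _ _), ← sum_charIdempotent hψ, Finset.mul_sum]
  simp only [of_mul_charIdempotent]

lemma comul_charIdempotent (m : R) :
    Coalgebra.comul (R := k) (charIdempotent ψ m)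
      = ∑ r : R, charIdempotent ψ r ⊗ₜ charIdempotent ψ (m - r) := by
  calc Coalgebra.comul (R := k) (charIdempotent ψ m)
      = Coalgebra.comul (R := k) (charIdempotent ψ m)
          * ((∑ r : R, charIdempotent ψ r) ⊗ₜ (∑ s : R, charIdempotent ψ s)) := by
        rw [sum_charIdempotent hψ, ← Algebra.TensorProduct.one_def, mul_one]
    _ = ∑ r : R, ∑ s : R, charAlgHom ψ (r + s) (charIdempotent ψ m)
          • (charIdempotent ψ r ⊗ₜ charIdempotent ψ s) := by
        rw [sum_tmul, Finset.mul_sum]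
        simp only [tmul_sum, Finset.mul_sum, comul_mul_tmul_charIdempotent]
    _ = ∑ r : R, charIdempotent ψ r ⊗ₜ charIdempotent ψ (m - r) := by
        simp only [charAlgHom_charIdempotent hψ, eq_comm (a := m), ← eq_sub_iff_add_eq', ite_smul, one_smul,
          zero_smul, Finset.sum_ite_eq', Finset.mem_univ, if_true]

lemma rMatrix_eq_sum_smul_tmul (d : R) :
    rMatrix ψ d = ∑ r : R, ∑ s : R, ψ (d * r * s) • (charIdempotent ψ r ⊗ₜ charIdempotent ψ s) := by
  simp only [rMatrix, of_eq_sum_smul_charIdempotent hψ, tmul_sum, tmul_smul, mul_comm _ (d * _)]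

lemma rMatrix_mul_rMatrix (d d' : R) : rMatrix ψ d * rMatrix ψ d' = rMatrix ψ (d + d') := by
  simp only [rMatrix, Finset.sum_mul_sum, Algebra.TensorProduct.tmul_mul_tmul,
    charIdempotent_mul_charIdempotent hψ, ite_tmul, Finset.sum_ite_eq,
    Finset.mem_univ, if_true, ← map_mul, ← ofAdd_add, add_mul]

lemma rMatrix_zero : rMatrix ψ 0 = 1 := by
  simp only [rMatrix, zero_mul, ofAdd_zero, map_one, ← sum_tmul, sum_charIdempotent hψ,
    Algebra.TensorProduct.one_def]

lemma isUnit_rMatrix (d : R) : IsUnit (rMatrix ψ d) :=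
  IsUnit.of_mul_eq_one (rMatrix ψ (-d)) <| by
    rw [rMatrix_mul_rMatrix hψ, add_neg_cancel, rMatrix_zero hψ]

lemma assoc_rTensor_comul_rMatrix (d : R) :
    TensorProduct.assoc k _ _ _ (LinearMap.rTensor _ (Coalgebra.comul (R := k)) (rMatrix ψ d))
      = Algebra.TensorProduct.map (AlgHom.id k _) Algebra.TensorProduct.includeRight
          (rMatrix ψ d) * Algebra.TensorProduct.includeRight (rMatrix ψ d) := by
  simp only [rMatrix, map_sum, LinearMap.rTensor_tmul, comul_charIdempotent hψ, sum_tmul,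
    assoc_tmul, Algebra.TensorProduct.map_tmul, AlgHom.id_apply,
    Algebra.TensorProduct.includeRight_apply, Finset.sum_mul_sum,
    Algebra.TensorProduct.tmul_mul_tmul, one_mul, mul_one, ← map_mul, ← ofAdd_add]
  rw [Finset.sum_comm]
  refine Finset.sum_congr rfl fun p _ => ?_
  refine (Fintype.sum_equiv (Equiv.addLeft p) _ _ fun q => ?_).symm
  simp only [Equiv.coe_addLeft, add_sub_cancel_left, mul_add]

lemma lTensor_comul_rMatrix (d : R) :
    LinearMap.lTensor _ (Coalgebra.comul (R := k)) (rMatrix ψ d)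
      = Algebra.TensorProduct.map (AlgHom.id k _) Algebra.TensorProduct.includeRight
          (rMatrix ψ d) * Algebra.TensorProduct.map (AlgHom.id k _)
            Algebra.TensorProduct.includeLeft (rMatrix ψ d) := by
  simp only [rMatrix, map_sum, LinearMap.lTensor_tmul, AlgHom.id_apply,
    (isGroupLikeElem_of (R := k) _).comul_eq_tmul_self, Algebra.TensorProduct.map_tmul,
    Algebra.TensorProduct.includeRight_apply, Algebra.TensorProduct.includeLeft_apply,
    Finset.sum_mul_sum, Algebra.TensorProduct.tmul_mul_tmul, one_mul, mul_one,
    charIdempotent_mul_charIdempotent hψ, ite_tmul, Finset.sum_ite_eq,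
    Finset.mem_univ, if_true]

end MonoidAlgebra

lemma AddChar.zmodChar_intCast {C : Type*} [DivisionCommMonoid C] {n : ℕ} [NeZero n] {ζ : C}
    (hζ : ζ ^ n = 1) (m : ℤ) : zmodChar n hζ m = ζ ^ m := by
  rw [← zsmul_one, AddChar.map_zsmul_eq_zpow, ← Nat.cast_one, zmodChar_apply', pow_one]

lemma ZMod.sum_range_natCast {M : Type*} [AddCommMonoid M] (n : ℕ) [NeZero n]
    (f : ZMod n → M) : ∑ i ∈ Finset.range n, f i = ∑ z : ZMod n, f z := by
  obtain ⟨m, rfl⟩ := Nat.exists_eq_succ_of_ne_zero (NeZero.ne n)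
  rw [Finset.sum_range]
  exact Finset.sum_congr rfl fun x _ => congrArg f (ZMod.natCast_zmod_val (n := m + 1) x)

open MonoidAlgebra

lemma aElem_pow (n i : ℕ) : aElem n ^ i = of ℂ _ (Multiplicative.ofAdd (i : ZMod n)) := by
  rw [aElem, ← map_pow, ← ofAdd_nsmul, nsmul_one]

lemma toLinearMap_comulCCn (n : ℕ) : (comulCCn n).toLinearMap = Coalgebra.comul (R := ℂ) := by
  have : comulCCn n = Bialgebra.comulAlgHom ℂ (CCn n) :=
    algHom_ext (fun g => by
      rw [← of_apply, comulCCn, lift_of, Bialgebra.comulAlgHom_apply,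
        (isGroupLikeElem_of (R := ℂ) g).comul_eq_tmul_self]
      rfl) (Subsingleton.elim _ _)
  rw [this]
  rfl

section

variable {n : ℕ} [NeZero n] {ω : ℂ} (hω : IsPrimitiveRoot ω n)
include hω

lemma Ee_eq_charIdempotent (kk : ℤ) :
    Ee n ω kk = charIdempotent (AddChar.zmodChar n hω.pow_eq_one) (kk : ZMod n) := by
  rw [Ee, charIdempotent, ZMod.card, ← ZMod.sum_range_natCast]
  refine congrArg _ (Finset.sum_congr rfl fun i _ => ?_)
  rw [aElem_pow, ← AddChar.zmodChar_intCast hω.pow_eq_one]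
  push_cast
  rw [mul_comm]

lemma Rmat_eq_rMatrix (d : ℕ) :
    Rmat n ω d = rMatrix (AddChar.zmodChar n hω.pow_eq_one) (d : ZMod n) := by
  rw [rMatrix_eq_sum_smul_tmul (AddChar.zmodChar_primitive_of_primitive_root n hω), Rmat,
    ← ZMod.sum_range_natCast]
  refine Finset.sum_congr rfl fun r _ => ?_
  rw [← ZMod.sum_range_natCast]
  refine Finset.sum_congr rfl fun s _ => ?_
  rw [Ee_eq_charIdempotent hω, Ee_eq_charIdempotent hω, ← AddChar.zmodChar_apply' hω.pow_eq_one]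
  push_cast
  rfl

end

theorem Rmat_is_universal_RMatrix_general (n : ℕ) (hn : 1 ≤ n) (ω : ℂ)
    (hω : IsPrimitiveRoot ω n) (d : ℕ) :
    IsUnit (Rmat n ω d) ∧
    (TensorProduct.assoc ℂ (CCn n) (CCn n) (CCn n))
        (LinearMap.rTensor (CCn n) (comulCCn n).toLinearMap (Rmat n ω d))
      = (Algebra.TensorProduct.map (AlgHom.id ℂ (CCn n))
            Algebra.TensorProduct.includeRight) (Rmat n ω d)
        * (Algebra.TensorProduct.includeRight
            (R := ℂ) (A := CCn n)) (Rmat n ω d) ∧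
    LinearMap.lTensor (CCn n) (comulCCn n).toLinearMap (Rmat n ω d)
      = (Algebra.TensorProduct.map (AlgHom.id ℂ (CCn n))
            Algebra.TensorProduct.includeRight) (Rmat n ω d)
        * (Algebra.TensorProduct.map (AlgHom.id ℂ (CCn n))
            Algebra.TensorProduct.includeLeft) (Rmat n ω d) ∧
    ∀ x : CCn n, Rmat n ω d * comulCCn n x
        = (TensorProduct.comm ℂ (CCn n) (CCn n)) (comulCCn n x) * Rmat n ω d := by
  have : NeZero n := ⟨by omega⟩
  have hψ := AddChar.zmodChar_primitive_of_primitive_root n hω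
  rw [Rmat_eq_rMatrix hω, toLinearMap_comulCCn]
  refine ⟨isUnit_rMatrix hψ _, assoc_rTensor_comul_rMatrix hψ _, lTensor_comul_rMatrix hψ _,
    fun x => ?_⟩
  rw [← AlgHom.toLinearMap_apply, toLinearMap_comulCCn, Coalgebra.comm_comul, mul_comm]

/-- `R_d` is a universal R-matrix of `ℂC_n`: it is invertible and satisfies
`(Δ ⊗ id)(R) = R₁₃R₂₃`, `(id ⊗ Δ)(R) = R₁₃R₁₂`, and `R Δ(x) = Δᵒᵖ(x) R`. -/
theorem Rmat_is_universal_RMatrix (n : ℕ) (hn : 1 ≤ n) (ω : ℂ)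
    (hω : IsPrimitiveRoot ω n) (d : ℕ) (hd : d < n) :
    IsUnit (Rmat n ω d) ∧
    (TensorProduct.assoc ℂ (CCn n) (CCn n) (CCn n))
        (LinearMap.rTensor (CCn n) (comulCCn n).toLinearMap (Rmat n ω d))
      = (Algebra.TensorProduct.map (AlgHom.id ℂ (CCn n))
            Algebra.TensorProduct.includeRight) (Rmat n ω d)
        * (Algebra.TensorProduct.includeRight
            (R := ℂ) (A := CCn n)) (Rmat n ω d) ∧
    LinearMap.lTensor (CCn n) (comulCCn n).toLinearMap (Rmat n ω d)
      = (Algebra.TensorProduct.map (AlgHom.id ℂ (CCn n))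
            Algebra.TensorProduct.includeRight) (Rmat n ω d)
        * (Algebra.TensorProduct.map (AlgHom.id ℂ (CCn n))
            Algebra.TensorProduct.includeLeft) (Rmat n ω d) ∧
    ∀ x : CCn n, Rmat n ω d * comulCCn n x
        = (TensorProduct.comm ℂ (CCn n) (CCn n)) (comulCCn n x) * Rmat n ω d :=
  Rmat_is_universal_RMatrix_general n hn ω hω d

end
end

section
/- Let n ≥ 1, ω ∈ ℂ a primitive n-th root of unity, and consider the quasitriangular Hopf algebra (ℂC_n, R_d) with R_d = ∑_{k,l=0}^{n-1} ω^{dkl} E_k ⊗ E_l, where E_k = (1/n) ∑_{i=0}^{n-1} ω^{-ik} a^i. Then the Drinfeld element of (ℂC_n, R_d) is u_d = ∑_{k=0}^{n-1} ω^{-dk²} E_k. -/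
open TensorProduct

noncomputable section

/-- The Drinfeld element `u = ∑ S(R⁽²⁾) R⁽¹⁾` of `(ℂC_n, R_d)`. -/
def drinfeldCCn (n : ℕ) (ω : ℂ) (d : ℕ) : CCn n :=
  LinearMap.mul' ℂ (CCn n)
    (LinearMap.rTensor (CCn n) (antipodeCCn n).toLinearMap
      ((TensorProduct.comm ℂ (CCn n) (CCn n)) (Rmat n ω d)))

/-!
Characters separate the points of `ℂC_n`, so it suffices to compare both sides under every
algebra map `φ : ℂC_n → ℂ`. Writing `ζ = φ a`, an `n`-th root of unity, one has
`φ E_k = [ζ = ω^k]` and, since `φ ∘ S` sends `a` to `ζ⁻¹`, `φ (S E_l) = [ζ⁻¹ = ω^l]`.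
For `ζ = ω^k` exactly one `l < n` has `ω^l = ω^{-k}`, and for it `ω^{dkl} = ω^{-dk²}`.
-/

open Finset

theorem sum_range_pow_eq_ite {K : Type*} [Field K] [DecidableEq K] {ξ : K} {n : ℕ}
    (h : ξ ^ n = 1) : ∑ i ∈ range n, ξ ^ i = if ξ = 1 then (n : K) else 0 := by
  split_ifs with hξ
  · simp [hξ]
  · rw [geom_sum_eq hξ, h, sub_self, zero_div]

theorem IsPrimitiveRoot.sum_range_ite_pow_eq {K M : Type*} [CommRing K] [IsDomain K]
    [DecidableEq K] [AddCommMonoid M] {ω ξ : K} {n : ℕ} [NeZero n] (hω : IsPrimitiveRoot ω n)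
    (hξ : ξ ^ n = 1) (g : K → M) :
    ∑ l ∈ range n, (if ω ^ l = ξ then g (ω ^ l) else 0) = g ξ := by
  obtain ⟨l₀, hl₀, rfl⟩ := hω.eq_pow_of_pow_eq_one hξ
  rw [sum_eq_single_of_mem l₀ (mem_range.mpr hl₀) fun l hl hne => if_neg fun h =>
    hne (hω.pow_inj (mem_range.mp hl) hl₀ h), if_pos rfl]

theorem IsPrimitiveRoot.sum_range_pow_mul_boole_inv_eq {K : Type*} [Field K] [DecidableEq K]
    {ω : K} {n : ℕ} [NeZero n] (hω : IsPrimitiveRoot ω n) (d k : ℕ) :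
    ∑ l ∈ range n, ω ^ (d * k * l) * (if (ω ^ k)⁻¹ = ω ^ l then 1 else 0)
      = ω ^ (-(d * k ^ 2 : ℤ)) := by
  have hξ : (ω ^ k)⁻¹ ^ n = 1 := by
    rw [inv_pow, ← pow_mul, mul_comm, pow_mul, hω.pow_eq_one, one_pow, inv_one]
  calc ∑ l ∈ range n, ω ^ (d * k * l) * (if (ω ^ k)⁻¹ = ω ^ l then 1 else 0)
      = ∑ l ∈ range n, if ω ^ l = (ω ^ k)⁻¹ then (ω ^ l) ^ (d * k) else 0 := by
        refine sum_congr rfl fun l _ => ?_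
        rw [← pow_mul, mul_comm l]
        simp [eq_comm]
    _ = (ω ^ k)⁻¹ ^ (d * k) := hω.sum_range_ite_pow_eq hξ _
    _ = ω ^ (-(d * k ^ 2 : ℤ)) := by
        rw [zpow_neg, ← inv_pow, ← pow_mul]
        norm_cast
        ring_nf

theorem MonoidAlgebra.eq_of_forall_algHom_apply_eq {α : Type*} [AddCommGroup α] [Finite α]
    {x y : MonoidAlgebra ℂ (Multiplicative α)}
    (h : ∀ φ : MonoidAlgebra ℂ (Multiplicative α) →ₐ[ℂ] ℂ, φ x = φ y) : x = y := by
  classical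
  have := Fintype.ofFinite α
  suffices ∀ z : MonoidAlgebra ℂ (Multiplicative α),
      (∀ φ : MonoidAlgebra ℂ (Multiplicative α) →ₐ[ℂ] ℂ, φ z = 0) → z = 0 from
    sub_eq_zero.mp (this _ fun φ => by rw [map_sub, h, sub_self])
  intro z hz
  have hψ : ∀ ψ : AddChar α ℂ, ∑ b : α, z.coeff (.ofAdd b) * ψ b = 0 := by
    intro ψ
    rw [← hz (MonoidAlgebra.lift ℂ ℂ _ ψ.toMonoidHom), MonoidAlgebra.lift_apply,
      Finsupp.sum_fintype _ _ (by simp)]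
    exact Fintype.sum_equiv Multiplicative.ofAdd _ _ fun b => by simp [smul_eq_mul]
  ext a
  have hcard : (Fintype.card α : ℂ) ≠ 0 := Nat.cast_ne_zero.mpr Fintype.card_ne_zero
  refine (mul_eq_zero.mp ?_).resolve_left hcard
  calc (Fintype.card α : ℂ) * z.coeff a
      = ∑ b : α, z.coeff (.ofAdd b) * ∑ ψ : AddChar α ℂ, ψ (b - a.toAdd) := by
        simp_rw [AddChar.sum_apply_eq_ite, sub_eq_zero, mul_ite, mul_zero]
        rw [Fintype.sum_ite_eq']
        simp [mul_comm]
    _ = ∑ ψ : AddChar α ℂ, ψ (-a.toAdd) * ∑ b : α, z.coeff (.ofAdd b) * ψ b := by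
        simp_rw [mul_sum]
        rw [sum_comm]
        refine sum_congr rfl fun ψ _ => sum_congr rfl fun b _ => ?_
        rw [sub_eq_add_neg, AddChar.map_add_eq_mul]
        ring
    _ = 0 := by simp [hψ]

theorem aElem_pow_self (n : ℕ) : aElem n ^ n = 1 := by
  rw [aElem, ← map_pow, ← ofAdd_nsmul, nsmul_one, ZMod.natCast_self, ofAdd_zero, map_one]

theorem antipodeCCn_aElem_mul_aElem (n : ℕ) : antipodeCCn n (aElem n) * aElem n = 1 := by
  rw [aElem, antipodeCCn, MonoidAlgebra.lift_of, MonoidHom.coe_mk, OneHom.coe_mk, ← map_mul,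
    inv_mul_cancel, map_one]

theorem algHom_apply_Ee {n : ℕ} (hn : n ≠ 0) {ω : ℂ} (hω : ω ^ n = 1)
    (φ : CCn n →ₐ[ℂ] ℂ) (k : ℤ) :
    φ (Ee n ω k) = if φ (aElem n) = ω ^ k then 1 else 0 := by
  have hω₀ : ω ^ k ≠ 0 := zpow_ne_zero _ (by rintro rfl; simp [zero_pow hn] at hω)
  have hωk : (ω ^ k) ^ n = 1 := by
    rw [← zpow_natCast, ← zpow_mul, mul_comm, zpow_mul, zpow_natCast, hω, one_zpow]
  have hφ : φ (aElem n) ^ n = 1 := by rw [← map_pow, aElem_pow_self, map_one]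
  have hξ : ((ω ^ k)⁻¹ * φ (aElem n)) ^ n = 1 := by
    rw [mul_pow, inv_pow, hωk, hφ, inv_one, one_mul]
  have hterm : ∀ i : ℕ,
      φ (ω ^ (-(i * k : ℤ)) • aElem n ^ i) = ((ω ^ k)⁻¹ * φ (aElem n)) ^ i := by
    intro i
    have : ω ^ (-(i * k : ℤ)) = (ω ^ k)⁻¹ ^ i := by
      rw [inv_pow, ← zpow_natCast, ← zpow_mul, ← zpow_neg, mul_comm]
    rw [map_smul, map_pow, smul_eq_mul, mul_pow, this]
  rw [Ee, map_smul, map_sum, sum_congr rfl fun i _ => hterm i, sum_range_pow_eq_ite hξ]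
  simp only [inv_mul_eq_one₀ hω₀, @eq_comm _ (ω ^ k)]
  split_ifs <;> simp [hn]

theorem drinfeldCCn_eq_sum (n : ℕ) (ω : ℂ) (d : ℕ) :
    drinfeldCCn n ω d = ∑ k ∈ range n, ∑ l ∈ range n,
      ω ^ (d * k * l) • (antipodeCCn n (Ee n ω l) * Ee n ω k) := by
  simp [drinfeldCCn, Rmat, map_sum, map_smul, TensorProduct.comm_tmul, LinearMap.rTensor_tmul,
    LinearMap.mul'_apply]

theorem drinfeldCCn_eq_general (n : ℕ) (hn : 1 ≤ n) (ω : ℂ) (hω : IsPrimitiveRoot ω n)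
    (d : ℕ) :
    drinfeldCCn n ω d
      = ∑ kk ∈ Finset.range n, ω ^ (-(d * kk ^ 2 : ℤ)) • Ee n ω (kk : ℤ) := by
  have : NeZero n := ⟨by omega⟩
  have hEe := algHom_apply_Ee (NeZero.ne n) hω.pow_eq_one
  refine MonoidAlgebra.eq_of_forall_algHom_apply_eq fun φ => ?_
  have hφS : (φ.comp (antipodeCCn n)) (aElem n) = (φ (aElem n))⁻¹ :=
    eq_inv_of_mul_eq_one_left <| by
      rw [AlgHom.comp_apply, ← map_mul, antipodeCCn_aElem_mul_aElem, map_one]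
  rw [drinfeldCCn_eq_sum, map_sum, map_sum]
  refine sum_congr rfl fun k _ => ?_
  simp only [map_sum, map_smul, map_mul, ← AlgHom.comp_apply φ (antipodeCCn n), hEe, hφS,
    zpow_natCast]
  split_ifs with hk
  · simp only [hk, smul_eq_mul, mul_one]
    exact hω.sum_range_pow_mul_boole_inv_eq d k
  · simp

/-- The Drinfeld element of `(ℂC_n, R_d)` is `u_d = ∑_{k=0}^{n-1} ω^{-dk²} E_k`. -/
theorem drinfeldCCn_eq (n : ℕ) (hn : 1 ≤ n) (ω : ℂ) (hω : IsPrimitiveRoot ω n)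
    (d : ℕ) (hd : d < n) :
    drinfeldCCn n ω d
      = ∑ kk ∈ Finset.range n, ω ^ (-(d * kk ^ 2 : ℤ)) • Ee n ω (kk : ℤ) :=
  drinfeldCCn_eq_general n hn ω hω d

end
end

section
/- Fix N ≥ 1, L ≥ 2, ν, λ ∈ {+1, −1}, and let k be a field containing a primitive 4NL-th root of unity ω. Define, for 0 ≤ i ≤ N−1, 0 ≤ j ≤ L−1 and a sign ±: α_{ij±} = ±ω^{L(2i+(1−ν)/2)+N(2j+(1−λ)/2)} and β_{ij±} = ±ω^{L(2i+(1−ν)/2)−N(2j+(1−λ)/2)}. Then the set I_{νλ} = { (α,β) ∈ k× × k× : (αβ)^N = ν, (αβ⁻¹)^L = λ } equals exactly { (α_{ij+}, β_{ij+}), (α_{ij−}, β_{ij−}) : 0 ≤ i ≤ N−1, 0 ≤ j ≤ L−1 }; in particular |I_{νλ}| = 2NL. -/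
/-!
Put `x = αβ` and `y = αβ⁻¹`. As `ω^{2NL} = -1`, the conditions read `x^N = (ω^{2L eν})^N` and
`y^L = (ω^{2N el})^L`; since `ω^{4L}` and `ω^{4N}` are primitive roots of unity of orders `N` and
`L`, this pins down `x = ω^{2L(2i+eν)}` and `y = ω^{2N(2j+el)}` with unique `i < N`, `j < L`.
Then `α² = xy` fixes `α` up to a sign `ε`, and `β = α y⁻¹`. Conversely `(i, j, ε)` is read off
from `x`, `y` and `α`, so there are exactly `2NL` solutions.
-/

noncomputable section

open Finset

variable (k : Type*) [Field k]

namespace IsPrimitiveRoot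

theorem pow_eq_neg_one_of_two_mul {R : Type*} [CommRing R] [IsDomain R] {ζ : R} {m : ℕ}
    (h : IsPrimitiveRoot ζ (2 * m)) (hm : 0 < m) : ζ ^ m = -1 :=
  eq_neg_one_of_two_right (h.pow (by omega) (mul_comm 2 m))

theorem exists_eq_mul_pow_of_pow_eq_pow {K : Type*} [Field K] {ζ x y : K} {n : ℕ} [NeZero n]
    (h : IsPrimitiveRoot ζ n) (hy : y ≠ 0) (hxy : x ^ n = y ^ n) : ∃ i < n, x = y * ζ ^ i := by
  obtain ⟨i, hi, hζ⟩ := h.eq_pow_of_pow_eq_one (ξ := x / y)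
    (by rw [div_pow, hxy, div_self (pow_ne_zero n hy)])
  exact ⟨i, hi, by rw [hζ, mul_div_cancel₀ x hy]⟩

end IsPrimitiveRoot

section BraidingParameters

variable {k} {ω : k} {N L : ℕ}

namespace IsPrimitiveRoot

variable (hω : IsPrimitiveRoot ω (4 * N * L)) (hN : 0 < N) (hL : 0 < L)
include hω hN hL

theorem pow_two_mul_mul_eq_neg_one : ω ^ (2 * N * L) = -1 :=
  pow_eq_neg_one_of_two_mul (by rwa [← mul_assoc, ← mul_assoc]) (by positivity)

theorem pow_two_mul_pow_eq_neg_one_pow (c : ℕ) : (ω ^ (2 * (L * c))) ^ N = (-1) ^ c := by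
  rw [← hω.pow_two_mul_mul_eq_neg_one hN hL]
  ring

theorem pow_four_mul : IsPrimitiveRoot (ω ^ (4 * L)) N :=
  hω.pow (by positivity) (by ring)

theorem exists_lt_eq_pow_of_pow_eq_neg_one_pow (c : ℕ) {x : k} (hx : x ^ N = (-1) ^ c) :
    ∃ i < N, x = ω ^ (2 * (L * (2 * i + c))) := by
  have : NeZero N := ⟨hN.ne'⟩
  obtain ⟨i, hi, rfl⟩ := (hω.pow_four_mul hN hL).exists_eq_mul_pow_of_pow_eq_pow
    (pow_ne_zero _ (hω.ne_zero (by positivity)))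
    (hx.trans (hω.pow_two_mul_pow_eq_neg_one_pow hN hL c).symm)
  exact ⟨i, hi, by ring⟩

theorem eq_of_pow_two_mul_eq (c : ℕ) {i i' : ℕ} (hi : i < N) (hi' : i' < N)
    (h : ω ^ (2 * (L * (2 * i + c))) = ω ^ (2 * (L * (2 * i' + c)))) : i = i' := by
  refine (hω.pow_four_mul hN hL).pow_inj hi hi' (mul_right_cancel₀
    (pow_ne_zero (2 * (L * c)) (hω.ne_zero (by positivity))) ?_)
  convert h using 1 <;> ring

end IsPrimitiveRoot

variable (ω N L) (eν el : ℕ)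

/-- The pair `(α_{ijε}, β_{ijε})` of the paper, for `q = (i, j, ε)`. -/
def braidingPair (q : ℕ × ℕ × k) : k × k :=
  (q.2.2 * ω ^ (L * (2 * q.1 + eν) + N * (2 * q.2.1 + el)),
    q.2.2 * ω ^ ((L * (2 * q.1 + eν) : ℤ) - (N * (2 * q.2.1 + el) : ℤ)))

variable {ω N L eν el}

theorem braidingPair_fst_ne_zero (hω : ω ≠ 0) {q : ℕ × ℕ × k} (hε : q.2.2 ≠ 0) :
    (braidingPair ω N L eν el q).1 ≠ 0 :=
  mul_ne_zero hε (pow_ne_zero _ hω)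

theorem braidingPair_snd_ne_zero (hω : ω ≠ 0) {q : ℕ × ℕ × k} (hε : q.2.2 ≠ 0) :
    (braidingPair ω N L eν el q).2 ≠ 0 :=
  mul_ne_zero hε (zpow_ne_zero _ hω)

theorem braidingPair_fst_mul_snd (hω : ω ≠ 0) {i j : ℕ} {ε : k} (hε : ε * ε = 1) :
    (braidingPair ω N L eν el (i, j, ε)).1 * (braidingPair ω N L eν el (i, j, ε)).2 =
      ω ^ (2 * (L * (2 * i + eν))) := by
  simp only [braidingPair]
  rw [mul_mul_mul_comm, hε, one_mul, ← zpow_natCast, ← zpow_add₀ hω, ← zpow_natCast]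
  push_cast
  ring_nf

theorem braidingPair_fst_mul_inv_snd (hω : ω ≠ 0) {i j : ℕ} {ε : k} (hε : ε * ε = 1) :
    (braidingPair ω N L eν el (i, j, ε)).1 * (braidingPair ω N L eν el (i, j, ε)).2⁻¹ =
      ω ^ (2 * (N * (2 * j + el))) := by
  simp only [braidingPair]
  rw [mul_inv, mul_mul_mul_comm, mul_inv_cancel₀ (left_ne_zero_of_mul_eq_one hε), one_mul,
    ← zpow_natCast, ← div_eq_mul_inv, ← zpow_sub₀ hω, ← zpow_natCast]
  push_cast
  ring_nf

variable (N L eν el) in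
def IsBraidingParameter (p : k × k) : Prop :=
  p.1 ≠ 0 ∧ p.2 ≠ 0 ∧ (p.1 * p.2) ^ N = (-1) ^ eν ∧ (p.1 * p.2⁻¹) ^ L = (-1) ^ el

section

variable (hω : IsPrimitiveRoot ω (4 * N * L)) (hN : 0 < N) (hL : 0 < L)
include hω hN hL

theorem isBraidingParameter_braidingPair {i j : ℕ} {ε : k} (hε : ε * ε = 1) :
    IsBraidingParameter N L eν el (braidingPair ω N L eν el (i, j, ε)) := by
  have hω0 : ω ≠ 0 := hω.ne_zero (by positivity)
  have hε0 : ε ≠ 0 := left_ne_zero_of_mul_eq_one hε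
  have hω' : IsPrimitiveRoot ω (4 * L * N) := by rwa [mul_right_comm]
  refine ⟨braidingPair_fst_ne_zero hω0 hε0, braidingPair_snd_ne_zero hω0 hε0, ?_, ?_⟩
  · rw [braidingPair_fst_mul_snd hω0 hε, hω.pow_two_mul_pow_eq_neg_one_pow hN hL, pow_add,
      pow_mul, neg_one_sq, one_pow, one_mul]
  · rw [braidingPair_fst_mul_inv_snd hω0 hε, hω'.pow_two_mul_pow_eq_neg_one_pow hL hN, pow_add,
      pow_mul, neg_one_sq, one_pow, one_mul]

theorem IsBraidingParameter.exists_eq_braidingPair {p : k × k}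
    (hp : IsBraidingParameter N L eν el p) :
    ∃ i < N, ∃ j < L, ∃ ε : k, ε * ε = 1 ∧ p = braidingPair ω N L eν el (i, j, ε) := by
  obtain ⟨α, β⟩ := p
  obtain ⟨hα, hβ, hαβ, hαβ'⟩ : α ≠ 0 ∧ β ≠ 0 ∧ (α * β) ^ N = (-1) ^ eν ∧
    (α * β⁻¹) ^ L = (-1) ^ el := hp
  have hω' : IsPrimitiveRoot ω (4 * L * N) := by rwa [mul_right_comm]
  obtain ⟨i, hi, hx⟩ := hω.exists_lt_eq_pow_of_pow_eq_neg_one_pow hN hL eν hαβ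
  obtain ⟨j, hj, hy⟩ := hω'.exists_lt_eq_pow_of_pow_eq_neg_one_pow hL hN el hαβ'
  have hsq : α ^ 2 = (ω ^ (L * (2 * i + eν) + N * (2 * j + el))) ^ 2 := by
    calc α ^ 2 = α * β * (α * β⁻¹) := by field_simp
      _ = _ := by rw [hx, hy]; ring
  obtain ⟨ε, hε, hαε⟩ : ∃ ε : k, ε * ε = 1 ∧ α = ε * ω ^ (L * (2 * i + eν) + N * (2 * j + el)) := by
    rcases sq_eq_sq_iff_eq_or_eq_neg.1 hsq with h | h
    exacts [⟨1, one_mul 1, by rw [h, one_mul]⟩, ⟨-1, by norm_num, by rw [h, neg_one_mul]⟩]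
  -- `β` is determined by `α` and `α β⁻¹`
  refine ⟨i, hi, j, hj, ε, hε, Prod.ext hαε (inv_injective (mul_left_cancel₀ hα ?_))⟩
  show α * β⁻¹ = α * (braidingPair ω N L eν el (i, j, ε)).2⁻¹
  rw [hy, ← braidingPair_fst_mul_inv_snd (L := L) (eν := eν) (i := i)
    (hω.ne_zero (by positivity)) hε, hαε]
  rfl

theorem isBraidingParameter_iff {p : k × k} :
    IsBraidingParameter N L eν el p ↔
      ∃ i < N, ∃ j < L, ∃ ε : k, ε * ε = 1 ∧ p = braidingPair ω N L eν el (i, j, ε) := by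
  refine ⟨fun hp ↦ hp.exists_eq_braidingPair hω hN hL, ?_⟩
  rintro ⟨i, -, j, -, ε, hε, rfl⟩
  exact isBraidingParameter_braidingPair hω hN hL hε

theorem braidingPair_injOn [DecidableEq k] :
    Set.InjOn (braidingPair ω N L eν el) ↑(range N ×ˢ range L ×ˢ ({1, -1} : Finset k)) := by
  rintro ⟨i, j, ε⟩ hq ⟨i', j', ε'⟩ hq' h
  simp only [coe_product, Set.mem_prod, coe_range, Set.mem_Iio, coe_insert, coe_singleton,
    Set.mem_insert_iff, Set.mem_singleton_iff, ← mul_self_eq_one_iff] at hq hq'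
  obtain ⟨hi, hj, hε⟩ := hq
  obtain ⟨hi', hj', hε'⟩ := hq'
  have hω0 : ω ≠ 0 := hω.ne_zero (by positivity)
  have hω' : IsPrimitiveRoot ω (4 * L * N) := by rwa [mul_right_comm]
  obtain rfl : i = i' := hω.eq_of_pow_two_mul_eq hN hL eν hi hi' <| by
    rw [← braidingPair_fst_mul_snd hω0 hε, ← braidingPair_fst_mul_snd hω0 hε', h]
  obtain rfl : j = j' := hω'.eq_of_pow_two_mul_eq hL hN el hj hj' <| by
    rw [← braidingPair_fst_mul_inv_snd hω0 hε, ← braidingPair_fst_mul_inv_snd hω0 hε', h]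
  obtain rfl : ε = ε' := mul_right_cancel₀ (pow_ne_zero _ hω0) (congrArg Prod.fst h)
  rfl

theorem ncard_setOf_isBraidingParameter :
    {p : k × k | IsBraidingParameter N L eν el p}.ncard = 2 * N * L := by
  classical
  have hS : {p : k × k | IsBraidingParameter N L eν el p} =
      ↑((range N ×ˢ range L ×ˢ ({1, -1} : Finset k)).image (braidingPair ω N L eν el)) := by
    ext p
    simp only [Set.mem_ofPred_eq, isBraidingParameter_iff hω hN hL, coe_image, Set.mem_image,
      mem_coe, mem_product, mem_range, mem_insert, mem_singleton, Prod.exists, mul_self_eq_one_iff]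
    aesop
  have h1 : (1 : k) ≠ -1 := by
    rw [← hω.pow_two_mul_mul_eq_neg_one hN hL]
    exact (hω.pow_ne_one_of_pos_of_lt (by positivity) (by nlinarith)).symm
  rw [hS, Set.ncard_coe_finset, card_image_of_injOn (braidingPair_injOn hω hN hL), card_product,
    card_product, card_range, card_range, card_pair h1]
  ring

end

end BraidingParameters

theorem braiding_parameter_set (N L : ℕ) (hN : 1 ≤ N) (hL : 2 ≤ L)
    (eν el : ℕ) (ω : k)
    (hω : IsPrimitiveRoot ω (4 * N * L)) :
    {p : k × k | p.1 ≠ 0 ∧ p.2 ≠ 0 ∧ (p.1 * p.2) ^ N = (-1 : k) ^ eν ∧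
        (p.1 * p.2⁻¹) ^ L = (-1 : k) ^ el}
      = {p : k × k | ∃ i < N, ∃ j < L, ∃ ε : k, (ε = 1 ∨ ε = -1) ∧
          p.1 = ε * ω ^ (L * (2 * i + eν) + N * (2 * j + el)) ∧
          p.2 = ε * ω ^ ((L * (2 * i + eν) : ℤ) - (N * (2 * j + el) : ℤ))} ∧
    {p : k × k | p.1 ≠ 0 ∧ p.2 ≠ 0 ∧ (p.1 * p.2) ^ N = (-1 : k) ^ eν ∧
        (p.1 * p.2⁻¹) ^ L = (-1 : k) ^ el}.ncard = 2 * N * L := by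
  have hL0 : 0 < L := by omega
  refine ⟨Set.ext fun p ↦ ?_, ncard_setOf_isBraidingParameter hω hN hL0⟩
  rw [Set.mem_ofPred_eq, ← IsBraidingParameter, isBraidingParameter_iff hω hN hL0]
  simp only [Set.mem_ofPred_eq, mul_self_eq_one_iff, Prod.ext_iff, braidingPair]

end
end
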